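/- arXiv:2605.16950 — 4 statements merged into one kernel-verified Lean document; each statement's English description precedes it below -/
import Mathlib

section
/- Let A = ℂ[t₀^{±1},...,t_m^{±1}], let S be the ideal generated by {t_i - 1 : 0 ≤ i ≤ m}, and let S⁺ be the ideal of the polynomial subring generated by {t_i - 1} viewed inside A (i.e., the linear span of products (t₀-1)^{r₀}⋯(t_m-1)^{r_m} with Σr_i > 0). Then for all positive integers k < k', S^k = (S⁺)^k + S^{k'}, where S^k denotes the ℂ-span of products (t₀-1)^{r₀}⋯(t_m-1)^{r_m}(t₀^{-1}-1)^{s₀}⋯(t_m^{-1}-1)^{s_m} with Σ(r_i + s_i) ≥ k. -/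
/-- The Laurent polynomial ring `ℂ[t₀^{±1},…,t_m^{±1}]`. -/
abbrev LaurentRing (m : ℕ) : Type := AddMonoidAlgebra ℂ (Fin (m + 1) →₀ ℤ)

/-- The monomial `t^r`. -/
noncomputable def tpow (m : ℕ) (r : Fin (m + 1) →₀ ℤ) : LaurentRing m :=
  AddMonoidAlgebra.single r 1

/-- `S^k`: the ℂ-span of products
`(t₀-1)^{r₀}⋯(t_m-1)^{r_m}(t₀⁻¹-1)^{s₀}⋯(t_m⁻¹-1)^{s_m}` with `Σ(rᵢ+sᵢ) ≥ k`. -/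
noncomputable def Sk (m k : ℕ) : Submodule ℂ (LaurentRing m) :=
  Submodule.span ℂ { x | ∃ r s : Fin (m + 1) → ℕ,
    k ≤ (∑ i, (r i + s i)) ∧
    x = (∏ i, (tpow m (Finsupp.single i 1) - 1) ^ (r i)) *
        (∏ i, (tpow m (Finsupp.single i (-1)) - 1) ^ (s i)) }

/-- `(S⁺)^k`: the ℂ-span of products `(t₀-1)^{r₀}⋯(t_m-1)^{r_m}` with `Σrᵢ ≥ k`. -/
noncomputable def Spk (m k : ℕ) : Submodule ℂ (LaurentRing m) :=
  Submodule.span ℂ { x | ∃ r : Fin (m + 1) → ℕ,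
    k ≤ (∑ i, r i) ∧
    x = ∏ i, (tpow m (Finsupp.single i 1) - 1) ^ (r i) }

/-! Write `g = t_j - 1` and `h = t_j⁻¹ - 1`. Since `t_j t_j⁻¹ = 1` we have `h = -g - g h`, so a
generator of `S^k` containing a factor `h` is a combination of two generators with that `h` traded
for a `g`: one of the same total degree and one of total degree one higher. Every trade raises the
degree in the `g`'s, so repeating it ends with generators that either have no `h` left, and lie in
`(S⁺)^k`, or have total degree at least `k'`. -/

theorem Fintype.prod_pow_add_pi_single {ι M : Type*} [Fintype ι] [DecidableEq ι] [CommMonoid M]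
    (f : ι → M) (r : ι → ℕ) (j : ι) :
    ∏ i, f i ^ (r + Pi.single j 1 : ι → ℕ) i = f j * ∏ i, f i ^ r i := by
  rw [mul_comm]
  simp only [Pi.add_apply, pow_add, Finset.prod_mul_distrib]
  congr
  rw [Fintype.prod_eq_single j fun i hi => by simp [hi]]
  simp

theorem exists_eq_add_pi_single_of_ne_zero {ι : Type*} [DecidableEq ι] {s : ι → ℕ} (hs : s ≠ 0) :
    ∃ j s', s = s' + (Pi.single j 1 : ι → ℕ) := by
  obtain ⟨j, hj⟩ := Function.ne_iff.mp hs
  refine ⟨j, Function.update s j (s j - 1), funext fun i => ?_⟩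
  rcases eq_or_ne i j with rfl | hij
  · simp only [Pi.zero_apply] at hj
    simp only [Pi.add_apply, Function.update_self, Pi.single_eq_same]
    omega
  · simp [hij]

theorem Fintype.sum_add_pi_single {ι : Type*} [Fintype ι] [DecidableEq ι] (r : ι → ℕ) (j : ι) :
    ∑ i, (r + Pi.single j 1 : ι → ℕ) i = ∑ i, r i + 1 := by
  simp [Finset.sum_add_distrib]

section

variable {m : ℕ}

theorem tpow_single_mul_tpow_single_neg (j : Fin (m + 1)) :
    tpow m (Finsupp.single j 1) * tpow m (Finsupp.single j (-1)) = 1 := by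
  simp [tpow, AddMonoidAlgebra.single_mul_single, AddMonoidAlgebra.one_def]

theorem tpow_single_neg_sub_one (j : Fin (m + 1)) :
    tpow m (Finsupp.single j (-1)) - 1 =
      -(tpow m (Finsupp.single j 1) - 1) -
        (tpow m (Finsupp.single j 1) - 1) * (tpow m (Finsupp.single j (-1)) - 1) := by
  linear_combination tpow_single_mul_tpow_single_neg j

variable (m) in
noncomputable def mixedMonomial (r s : Fin (m + 1) → ℕ) : LaurentRing m :=
  (∏ i, (tpow m (Finsupp.single i 1) - 1) ^ (r i)) *
    (∏ i, (tpow m (Finsupp.single i (-1)) - 1) ^ (s i))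

theorem mixedMonomial_add_single_right (r s : Fin (m + 1) → ℕ) (j : Fin (m + 1)) :
    mixedMonomial m r (s + Pi.single j 1) =
      -mixedMonomial m (r + Pi.single j 1) s -
        mixedMonomial m (r + Pi.single j 1) (s + Pi.single j 1) := by
  simp only [mixedMonomial, Fintype.prod_pow_add_pi_single]
  linear_combination (∏ i, (tpow m (Finsupp.single i 1) - 1) ^ r i) *
    (∏ i, (tpow m (Finsupp.single i (-1)) - 1) ^ s i) * tpow_single_neg_sub_one j

theorem mixedMonomial_mem_Sk {k : ℕ} {r s : Fin (m + 1) → ℕ} (h : k ≤ ∑ i, (r i + s i)) :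
    mixedMonomial m r s ∈ Sk m k :=
  Submodule.subset_span ⟨r, s, h, rfl⟩

theorem mixedMonomial_zero_right_mem_Spk {k : ℕ} {r : Fin (m + 1) → ℕ} (h : k ≤ ∑ i, r i) :
    mixedMonomial m r 0 ∈ Spk m k :=
  Submodule.subset_span ⟨r, h, by simp [mixedMonomial]⟩

theorem mixedMonomial_mem_Spk_sup_Sk {k k' : ℕ} {r s : Fin (m + 1) → ℕ}
    (h : k ≤ ∑ i, r i + ∑ i, s i) : mixedMonomial m r s ∈ Spk m k ⊔ Sk m k' := by
  obtain ⟨n, hn⟩ : ∃ n, k' ≤ ∑ i, r i + n := ⟨k', by omega⟩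
  induction n generalizing r s with
  | zero =>
    refine Submodule.mem_sup_right (mixedMonomial_mem_Sk ?_)
    rw [Finset.sum_add_distrib]
    omega
  | succ n ih =>
    rcases eq_or_ne s 0 with rfl | hs
    · exact Submodule.mem_sup_left (mixedMonomial_zero_right_mem_Spk (by simpa using h))
    obtain ⟨j, s, rfl⟩ := exists_eq_add_pi_single_of_ne_zero hs
    have hr := Fintype.sum_add_pi_single r j
    have hs := Fintype.sum_add_pi_single s j
    rw [mixedMonomial_add_single_right]
    exact sub_mem (neg_mem (ih (by omega) (by omega))) (ih (by omega) (by omega))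

variable (m) in
theorem Sk_antitone : Antitone (Sk m) :=
  fun _ _ hkk' => Submodule.span_mono fun _ ⟨r, s, h, hx⟩ => ⟨r, s, hkk'.trans h, hx⟩

variable (m) in
theorem Spk_le_Sk (k : ℕ) : Spk m k ≤ Sk m k :=
  Submodule.span_le.mpr <| by
    rintro _ ⟨r, h, rfl⟩
    simpa [mixedMonomial] using mixedMonomial_mem_Sk (s := 0) (by simpa using h)

end

theorem Sk_eq_Spk_sup_Sk_general (m k k' : ℕ) (hkk' : k < k') :
    Sk m k = Spk m k ⊔ Sk m k' :=
  le_antisymm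
    (Submodule.span_le.mpr fun _ ⟨_, _, h, hx⟩ =>
      hx ▸ mixedMonomial_mem_Spk_sup_Sk (h.trans_eq Finset.sum_add_distrib))
    (sup_le (Spk_le_Sk m k) (Sk_antitone m hkk'.le))

/-- For positive integers `k < k'`, `S^k = (S⁺)^k + S^{k'}`. -/
theorem Sk_eq_Spk_sup_Sk (m k k' : ℕ) (hk : 0 < k) (hkk' : k < k') :
    Sk m k = Spk m k ⊔ Sk m k' :=
  Sk_eq_Spk_sup_Sk_general m k k' hkk'
end

section
/- Let (A, k) be a Lie–Rinehart pair (non-super case), g = A ⊕ k its associated quasi-Poisson algebra with product (a⊕δ)·(b⊕σ) = ab ⊕ (aσ + bδ), bracket {a⊕δ, b⊕σ} = (δ(b) − σ(a)) ⊕ [δ,σ], and projection π: g → A, a⊕δ ↦ a. Then L(g) := ℂ[t₀^{±1}] ⊗ g with bracket [t₀^r ⊗ x, t₀^s ⊗ y] := t₀^{r+s} ⊗ ({x,y} − r·x·π(y) + s·π(x)·y) is a Lie algebra. -/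
section

variable {A : Type*} [CommRing A] [Algebra ℂ A]
variable {L : Type*} [LieRing L] [LieAlgebra ℂ L] [Module A L]

/-- The commutative product `(a⊕δ)·(b⊕σ) = ab ⊕ (aσ + bδ)` on `g = A ⊕ k`. -/
def gMul (x y : A × L) : A × L := (x.1 * y.1, x.1 • y.2 + y.1 • x.2)

/-- The bracket `{a⊕δ, b⊕σ} = (δ(b) − σ(a)) ⊕ [δ,σ]` on `g = A ⊕ k`. -/
def gBracket (act : L →ₗ⁅ℂ⁆ Derivation ℂ A A) (x y : A × L) : A × L :=
  (act x.2 y.1 - act y.2 x.1, ⁅x.2, y.2⁆)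

/-- The degree-component of the bracket on `L(g) = ℂ[t₀^{±1}] ⊗ g`:
`[t₀^r ⊗ x, t₀^s ⊗ y] = t₀^{r+s} ⊗ ({x,y} − r·x·π(y) + s·π(x)·y)`, where
`π : g → A` is the first projection. -/
def lBracket (act : L →ₗ⁅ℂ⁆ Derivation ℂ A A) (r : ℤ) (x : A × L) (s : ℤ) (y : A × L) :
    A × L :=
  gBracket act x y - r • gMul x (y.1, 0) + s • gMul (x.1, 0) y

end

/-!
Expanding the bracket on `L(g)` componentwise reduces everything to identities in `A` and in `k`.
Skew-symmetry is immediate. For the Jacobi identity, the `A`-component is a polynomial identity once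
`act` is known to be `A`-linear, a Lie algebra map and to act by derivations; the `k`-component
follows from the Jacobi identity of `k` once the anchor compatibility has been turned into the
Leibniz rules `⁅u, c • v⁆ = u(c) • v + c • ⁅u, v⁆` and `⁅c • u, v⁆ = -(v(c) • u) + c • ⁅u, v⁆`.
-/

section

variable {A : Type*} [CommRing A] [Algebra ℂ A]
variable {L : Type*} [LieRing L] [LieAlgebra ℂ L] [Module A L]
variable (act : L →ₗ⁅ℂ⁆ Derivation ℂ A A)

@[simp]
lemma lBracket_fst (r : ℤ) (x : A × L) (s : ℤ) (y : A × L) :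
    (lBracket act r x s y).1 = act x.2 y.1 - act y.2 x.1 - r • (x.1 * y.1) + s • (x.1 * y.1) := by
  simp [lBracket, gBracket, gMul]

@[simp]
lemma lBracket_snd (r : ℤ) (x : A × L) (s : ℤ) (y : A × L) :
    (lBracket act r x s y).2 = ⁅x.2, y.2⁆ - r • y.1 • x.2 + s • x.1 • y.2 := by
  simp [lBracket, gBracket, gMul]

lemma lBracket_self (r : ℤ) (x : A × L) : lBracket act r x r x = 0 := by
  ext <;> simp

lemma lBracket_swap (r s : ℤ) (x y : A × L) :
    lBracket act r x s y = -lBracket act s y r x := by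
  ext
  · simp only [lBracket_fst, Prod.fst_neg]
    ring
  · simp only [lBracket_snd, Prod.snd_neg, ← lie_skew x.2 y.2]
    abel

lemma lie_smul_of_compat
    (compat : ∀ (a b : A) (δ γ : L),
      ⁅a • δ, b • γ⁆ = (a * act δ b) • γ - (b * act γ a) • δ + (a * b) • ⁅δ, γ⁆)
    (c : A) (u v : L) : ⁅u, c • v⁆ = act u c • v + c • ⁅u, v⁆ := by
  simpa using compat 1 c u v

lemma smul_lie_of_compat
    (compat : ∀ (a b : A) (δ γ : L),
      ⁅a • δ, b • γ⁆ = (a * act δ b) • γ - (b * act γ a) • δ + (a * b) • ⁅δ, γ⁆)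
    (c : A) (u v : L) : ⁅c • u, v⁆ = -(act v c • u) + c • ⁅u, v⁆ := by
  simpa using compat c 1 u v

lemma lBracket_jacobi_fst (hact : ∀ (a : A) (δ : L), act (a • δ) = a • act δ)
    (r s p : ℤ) (x y z : A × L) :
    (lBracket act r x (s + p) (lBracket act s y p z)).1 =
      (lBracket act (r + s) (lBracket act r x s y) p z).1
        + (lBracket act s y (r + p) (lBracket act r x p z)).1 := by
  simp only [lBracket_fst, lBracket_snd, ← Int.cast_smul_eq_zsmul A, map_sub, map_add, hact,
    LieHom.map_lie, Derivation.commutator_apply, Derivation.sub_apply, Derivation.add_apply,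
    Derivation.smul_apply, Derivation.leibniz, Derivation.map_intCast, smul_eq_mul]
  push_cast
  ring

lemma lBracket_jacobi_snd
    (compat : ∀ (a b : A) (δ γ : L),
      ⁅a • δ, b • γ⁆ = (a * act δ b) • γ - (b * act γ a) • δ + (a * b) • ⁅δ, γ⁆)
    (r s p : ℤ) (x y z : A × L) :
    (lBracket act r x (s + p) (lBracket act s y p z)).2 =
      (lBracket act (r + s) (lBracket act r x s y) p z).2
        + (lBracket act s y (r + p) (lBracket act r x p z)).2 := by
  obtain ⟨a, δ⟩ := x
  obtain ⟨b, γ⟩ := y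
  obtain ⟨c, ε⟩ := z
  simp only [lBracket_fst, lBracket_snd, ← Int.cast_smul_eq_zsmul A, lie_sub, sub_lie, lie_add,
    add_lie, lie_smul_of_compat act compat, smul_lie_of_compat act compat,
    ← lie_skew γ δ,
    smul_add, smul_sub, smul_neg, smul_smul, Derivation.leibniz, smul_eq_mul,
    Derivation.map_intCast]
  rw [leibniz_lie δ γ ε]
  module

end

/-- For a Lie–Rinehart pair `(A, k)` with quasi-Poisson algebra `g = A ⊕ k`, the bracket
`[t₀^r ⊗ x, t₀^s ⊗ y] = t₀^{r+s} ⊗ ({x,y} − r·x·π(y) + s·π(x)·y)` makes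
`L(g) = ℂ[t₀^{±1}] ⊗ g` a Lie algebra: expressed on pure tensors (which span `L(g)`,
with the degree of a bracket being the sum of the degrees), the bracket is alternating,
skew-symmetric and satisfies the Jacobi identity. -/
theorem lBracket_isLieAlgebra (A : Type*) [CommRing A] [Algebra ℂ A]
    (L : Type*) [LieRing L] [LieAlgebra ℂ L] [Module A L]
    (act : L →ₗ⁅ℂ⁆ Derivation ℂ A A)
    (hact : ∀ (a : A) (δ : L), act (a • δ) = a • act δ)
    (compat : ∀ (a b : A) (δ γ : L),
      ⁅a • δ, b • γ⁆ =
        (a * act δ b) • γ - (b * act γ a) • δ + (a * b) • ⁅δ, γ⁆) :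
    (∀ (r : ℤ) (x : A × L), lBracket act r x r x = 0) ∧
    (∀ (r s : ℤ) (x y : A × L), lBracket act r x s y = - lBracket act s y r x) ∧
    (∀ (r s p : ℤ) (x y z : A × L),
      lBracket act r x (s + p) (lBracket act s y p z) =
        lBracket act (r + s) (lBracket act r x s y) p z
          + lBracket act s y (r + p) (lBracket act r x p z)) :=
  ⟨lBracket_self act, lBracket_swap act, fun r s p x y z =>
    Prod.ext (lBracket_jacobi_fst act hact r s p x y z)
      (lBracket_jacobi_snd act compat r s p x y z)⟩
end

section
/- Let A = ℂ[t₀^{±1},...,t_m^{±1}], let S be the ideal generated by {t_i − 1 : 0 ≤ i ≤ m}, let Δ = {t_i d/dt_i : 0 ≤ i ≤ m}, and let SΔ ⊆ Der(A) be the ℂ-span of products f·δ with f ∈ S, δ ∈ Δ. Then SΔ is a Lie subalgebra of Der(A), S²Δ is a Lie ideal of SΔ, and the quotient SΔ/S²Δ is isomorphic as a Lie algebra to gl(m+1, ℂ), via (t_i − 1) t_j d/dt_j + S²Δ ↦ E_{i,j}. -/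
/-- The Euler derivation `d_i = t_i d/dt_i`, as a ℂ-linear endomorphism of `A`
(it sends `t^r ↦ r_i t^r`). -/
noncomputable def euler (m : ℕ) (i : Fin (m + 1)) : Module.End ℂ (LaurentRing m) :=
  (AddMonoidAlgebra.coeffLinearEquiv ℂ).symm.toLinearMap ∘ₗ
    (Finsupp.lsum ℂ fun r : Fin (m + 1) →₀ ℤ => ((r i : ℤ) : ℂ) • Finsupp.lsingle r) ∘ₗ
      (AddMonoidAlgebra.coeffLinearEquiv ℂ).toLinearMap

/-- Multiplication by `f` as an endomorphism of `A`. -/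
noncomputable def mulOp (m : ℕ) (f : LaurentRing m) : Module.End ℂ (LaurentRing m) :=
  LinearMap.mulLeft ℂ f

/-- The ideal `S = (t₀ - 1, …, t_m - 1)`. -/
noncomputable def Sideal (m : ℕ) : Ideal (LaurentRing m) :=
  Ideal.span { x | ∃ i : Fin (m + 1), x = tpow m (Finsupp.single i 1) - 1 }

/-- `S^kΔ`: the ℂ-span of the operators `f·d_i` with `f ∈ S^k`, inside `End(A)`. -/
noncomputable def SkDelta (m k : ℕ) : Submodule ℂ (Module.End ℂ (LaurentRing m)) :=
  Submodule.span ℂ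
    { x | ∃ f ∈ (Sideal m) ^ k, ∃ i : Fin (m + 1), x = mulOp m f ∘ₗ euler m i }

/-!
Elements of `SΔ` are vector fields vanishing at the point `t = 1`, i.e. at the augmentation
`ε : A → ℂ`, and the isomorphism sends such a field `T` to its linear part there, the matrix
`(ε (d_p (T x_q)))_{p,q}` in the coordinates `x_q = t_q - 1`. The `x_q` generate `ker ε = S` and
`ε ∘ d_p` is dual to them, so every `f ∈ S` equals `∑ ε (d_p f) x_p` modulo `S²`; hence a field
in `SΔ` is determined by its linear part modulo `S²Δ`, while fields in `S²Δ` have linear part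
zero. For two fields vanishing at the point, the linear part of the bracket is the commutator of
the linear parts. Nothing else about `A` is used: any commutative algebra with a point `ε` whose
ideal is generated by `x_1, …, x_n`, and commuting derivations with `ε (D_p x_q) = δ_pq`, will do.
-/

section

variable {K R : Type*} [CommRing K] [CommRing R] [Algebra K R]

theorem Derivation.map_mem_pow_of_mem_pow_succ (D : Derivation K R R) {I : Ideal R} :
    ∀ {k : ℕ} {f : R}, f ∈ I ^ (k + 1) → D f ∈ I ^ k
  | 0, _, _ => by simp
  | k + 1, f, hf => by
    rw [pow_succ] at hf
    refine Submodule.mul_induction_on hf (fun a ha b hb => ?_) (fun a b ha hb => ?_)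
    · rw [D.leibniz, smul_eq_mul, smul_eq_mul]
      refine add_mem (Ideal.mul_mem_right _ _ ha) ?_
      exact pow_succ' I k ▸ Ideal.mul_mem_mul hb (D.map_mem_pow_of_mem_pow_succ ha)
    · rw [map_add]
      exact add_mem ha hb

theorem Submodule.apply_mem_of_forall_mem_span {M N P : Type*} [AddCommMonoid M] [Module K M]
    [AddCommMonoid N] [Module K N] [AddCommMonoid P] [Module K P] (f : M →ₗ[K] N →ₗ[K] P)
    {s : Set M} {t : Set N} {p : Submodule K P} (h : ∀ a ∈ s, ∀ b ∈ t, f a b ∈ p) {x : M} {y : N}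
    (hx : x ∈ span K s) (hy : y ∈ span K t) : f x y ∈ p := by
  have hxy := Submodule.apply_mem_map₂ f hx hy
  rw [Submodule.map₂_span_span] at hxy
  exact Submodule.span_le.2 (by rintro _ ⟨a, ha, b, hb, rfl⟩; exact h a ha b hb) hxy

variable (K) in
def commutatorBilin (A : Type*) [Ring A] [Algebra K A] : A →ₗ[K] A →ₗ[K] A :=
  LinearMap.mul K A - (LinearMap.mul K A).flip

theorem commutatorBilin_apply {A : Type*} [Ring A] [Algebra K A] (a b : A) :
    commutatorBilin K A a b = ⁅a, b⁆ := by
  simp [commutatorBilin, Ring.lie_def]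

theorem lie_mulLeft_comp_derivation (f g : R) (D E : Derivation K R R) (h : ⁅D, E⁆ = 0) :
    ⁅LinearMap.mulLeft K f ∘ₗ (D : R →ₗ[K] R), LinearMap.mulLeft K g ∘ₗ (E : R →ₗ[K] R)⁆ =
      LinearMap.mulLeft K (f * D g) ∘ₗ (E : R →ₗ[K] R) -
        LinearMap.mulLeft K (g * E f) ∘ₗ (D : R →ₗ[K] R) := by
  ext a
  have hDE : D (E a) = E (D a) := sub_eq_zero.1 (by rw [← Derivation.commutator_apply, h]; rfl)
  simp only [Ring.lie_def, LinearMap.sub_apply, Module.End.mul_apply, LinearMap.comp_apply,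
    LinearMap.mulLeft_apply, Derivation.coeFn_coe, Derivation.leibniz, smul_eq_mul, hDE]
  ring

variable {ι : Type*}

def derivSpan (I : Ideal R) (D : ι → Derivation K R R) : Submodule K (Module.End K R) :=
  Submodule.span K {T | ∃ f ∈ I, ∃ i, T = LinearMap.mulLeft K f ∘ₗ (D i : R →ₗ[K] R)}

theorem mulLeft_comp_mem_derivSpan {I : Ideal R} (D : ι → Derivation K R R) {f : R} (hf : f ∈ I)
    (i : ι) : LinearMap.mulLeft K f ∘ₗ (D i : R →ₗ[K] R) ∈ derivSpan I D :=
  Submodule.subset_span ⟨f, hf, i, rfl⟩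

theorem lie_mem_derivSpan_pow_succ {I : Ideal R} {D : ι → Derivation K R R}
    (hD : ∀ i j, ⁅D i, D j⁆ = 0) (k : ℕ) {T U : Module.End K R} (hT : T ∈ derivSpan I D)
    (hU : U ∈ derivSpan (I ^ (k + 1)) D) : ⁅T, U⁆ ∈ derivSpan (I ^ (k + 1)) D := by
  rw [← commutatorBilin_apply (K := K)]
  refine Submodule.apply_mem_of_forall_mem_span _ ?_ hT hU
  rintro _ ⟨f, hf, i, rfl⟩ _ ⟨g, hg, j, rfl⟩
  rw [commutatorBilin_apply, lie_mulLeft_comp_derivation f g _ _ (hD i j)]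
  refine sub_mem (mulLeft_comp_mem_derivSpan D ?_ j) (mulLeft_comp_mem_derivSpan D ?_ i)
  · exact pow_succ' I k ▸ Ideal.mul_mem_mul hf ((D i).map_mem_pow_of_mem_pow_succ hg)
  · exact Ideal.mul_mem_right _ _ hg

theorem lie_mem_derivSpan {I : Ideal R} {D : ι → Derivation K R R} (hD : ∀ i j, ⁅D i, D j⁆ = 0)
    {T U : Module.End K R} (hT : T ∈ derivSpan I D) (hU : U ∈ derivSpan I D) :
    ⁅T, U⁆ ∈ derivSpan I D := by
  simpa using lie_mem_derivSpan_pow_succ hD 0 hT (by simpa using hU)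

theorem AlgHom.apply_derivation_mul_of_mem_ker {ε : R →ₐ[K] K} (D : Derivation K R R) {f : R}
    (hf : f ∈ RingHom.ker ε) (g : R) : ε (D (f * g)) = ε (D f) * ε g := by
  rw [RingHom.mem_ker] at hf
  simp [Derivation.leibniz, hf, mul_comm]

variable (ε : R →ₐ[K] K) (D : ι → Derivation K R R) (x : ι → R)

def linearization : Module.End K R →ₗ[K] Matrix ι ι K where
  toFun T := Matrix.of fun p q => ε (D p (T (x q)))
  map_add' T U := by ext; simp
  map_smul' c T := by ext; simp

variable {ε D x}

theorem linearization_mulLeft_comp {f : R} (hf : f ∈ RingHom.ker ε) (j : ι) :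
    linearization ε D x (LinearMap.mulLeft K f ∘ₗ (D j : R →ₗ[K] R)) =
      Matrix.vecMulVec (fun p => ε (D p f)) (fun q => ε (D j (x q))) := by
  ext p q
  exact ε.apply_derivation_mul_of_mem_ker (D p) hf _

theorem linearization_eq_zero_of_mem_derivSpan_sq {T : Module.End K R}
    (hT : T ∈ derivSpan (RingHom.ker ε ^ 2) D) : linearization ε D x T = 0 := by
  refine Submodule.span_le (p := LinearMap.ker (linearization ε D x)).2 ?_ hT
  rintro _ ⟨f, hf, j, rfl⟩
  have hDf (p : ι) : D p f ∈ RingHom.ker ε := by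
    simpa using (D p).map_mem_pow_of_mem_pow_succ (k := 1) hf
  rw [SetLike.mem_coe, LinearMap.mem_ker,
    linearization_mulLeft_comp (Ideal.pow_le_self two_ne_zero hf)]
  ext p q
  simp [Matrix.vecMulVec_apply, RingHom.mem_ker.1 (hDf p)]

variable [DecidableEq ι]

structure IsDualCoordinates (ε : R →ₐ[K] K) (D : ι → Derivation K R R) (x : ι → R) : Prop where
  span_range_eq_ker : Ideal.span (Set.range x) = RingHom.ker ε
  apply_apply : ∀ p q, ε (D p (x q)) = if p = q then 1 else 0

namespace IsDualCoordinates

theorem mem_ker (h : IsDualCoordinates ε D x) (i : ι) : x i ∈ RingHom.ker ε :=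
  h.span_range_eq_ker ▸ Ideal.subset_span ⟨i, rfl⟩

theorem apply_eq_single (h : IsDualCoordinates ε D x) (j : ι) :
    (fun q => ε (D j (x q))) = Pi.single j 1 := by
  ext q
  simp [h.apply_apply, Pi.single_apply, eq_comm]

theorem linearization_mulLeft_comp (h : IsDualCoordinates ε D x) {f : R}
    (hf : f ∈ RingHom.ker ε) (j : ι) :
    linearization ε D x (LinearMap.mulLeft K f ∘ₗ (D j : R →ₗ[K] R)) =
      Matrix.vecMulVec (fun p => ε (D p f)) (Pi.single j 1) := by
  rw [_root_.linearization_mulLeft_comp hf, h.apply_eq_single]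

theorem linearization_mulLeft_comp_self (h : IsDualCoordinates ε D x) (i j : ι) :
    linearization ε D x (LinearMap.mulLeft K (x i) ∘ₗ (D j : R →ₗ[K] R)) = Matrix.single i j 1 := by
  rw [h.linearization_mulLeft_comp (h.mem_ker i), Matrix.single_eq_single_vecMulVec_single]
  congr 1
  ext p
  simp [h.apply_apply, Pi.single_apply]

variable [Fintype ι]

theorem linearization_lie (h : IsDualCoordinates ε D x) (hD : ∀ i j, ⁅D i, D j⁆ = 0)
    {T U : Module.End K R} (hT : T ∈ derivSpan (RingHom.ker ε) D)
    (hU : U ∈ derivSpan (RingHom.ker ε) D) :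
    linearization ε D x ⁅T, U⁆ =
      linearization ε D x T * linearization ε D x U -
        linearization ε D x U * linearization ε D x T := by
  let B := (commutatorBilin K (Module.End K R)).compr₂ (linearization ε D x) -
    (commutatorBilin K (Matrix ι ι K)).compl₁₂ (linearization ε D x) (linearization ε D x)
  have hB : B T U ∈ (⊥ : Submodule K (Matrix ι ι K)) := by
    refine Submodule.apply_mem_of_forall_mem_span B ?_ hT hU
    rintro _ ⟨f, hf, i, rfl⟩ _ ⟨g, hg, j, rfl⟩
    rw [Submodule.mem_bot]
    simp only [B, LinearMap.sub_apply, LinearMap.compr₂_apply, LinearMap.compl₁₂_apply,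
      commutatorBilin_apply, lie_mulLeft_comp_derivation f g _ _ (hD i j), map_sub,
      h.linearization_mulLeft_comp (Ideal.mul_mem_right _ _ hf),
      h.linearization_mulLeft_comp (Ideal.mul_mem_right _ _ hg),
      h.linearization_mulLeft_comp hf, h.linearization_mulLeft_comp hg,
      ε.apply_derivation_mul_of_mem_ker _ hf, ε.apply_derivation_mul_of_mem_ker _ hg]
    ext p q
    simp [Ring.lie_def, Matrix.mul_apply, Matrix.vecMulVec_apply, Pi.single_apply]
  simpa [B, commutatorBilin_apply, Ring.lie_def, sub_eq_zero] using hB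

variable (D x) in
def linearVectorField : Matrix ι ι K →ₗ[K] Module.End K R where
  toFun M := ∑ p, ∑ q, M p q • (LinearMap.mulLeft K (x p) ∘ₗ (D q : R →ₗ[K] R))
  map_add' M N := by simp [add_smul, Finset.sum_add_distrib]
  map_smul' c M := by simp [Finset.smul_sum, smul_smul]

theorem linearization_linearVectorField (h : IsDualCoordinates ε D x) (M : Matrix ι ι K) :
    linearization ε D x (linearVectorField D x M) = M := by
  simp [linearVectorField, h.linearization_mulLeft_comp_self, Matrix.smul_single]
  exact (Matrix.matrix_eq_sum_single M).symm

theorem linearVectorField_mem_derivSpan (h : IsDualCoordinates ε D x) (M : Matrix ι ι K) :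
    linearVectorField D x M ∈ derivSpan (RingHom.ker ε) D :=
  sum_mem fun p _ => sum_mem fun q _ =>
    Submodule.smul_mem _ _ (mulLeft_comp_mem_derivSpan D (h.mem_ker p) q)

theorem sub_sum_mem_ker_sq (h : IsDualCoordinates ε D x) {f : R} (hf : f ∈ RingHom.ker ε) :
    f - ∑ p, ε (D p f) • x p ∈ RingHom.ker ε ^ 2 := by
  obtain ⟨c, rfl⟩ := Ideal.mem_span_range_iff_exists_fun.1 (h.span_range_eq_ker ▸ hf)
  have hc (p : ι) : ε (D p (∑ q, c q * x q)) = ε (c p) := by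
    simp [Derivation.leibniz, RingHom.mem_ker.1 (h.mem_ker _), h.apply_apply]
  have hsum : ∑ q, c q * x q - ∑ p, ε (c p) • x p =
      ∑ p, (c p - algebraMap K R (ε (c p))) * x p := by
    simp [sub_mul, Algebra.smul_def, Finset.sum_sub_distrib]
  simp only [hc]
  rw [hsum, sq]
  exact sum_mem fun p _ => Ideal.mul_mem_mul (by simp [RingHom.mem_ker]) (h.mem_ker p)

theorem sub_linearVectorField_mem_derivSpan_sq (h : IsDualCoordinates ε D x)
    {T : Module.End K R} (hT : T ∈ derivSpan (RingHom.ker ε) D) :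
    T - linearVectorField D x (linearization ε D x T) ∈ derivSpan (RingHom.ker ε ^ 2) D := by
  let φ : Module.End K (Module.End K R) :=
    LinearMap.id - linearVectorField D x ∘ₗ linearization ε D x
  change φ T ∈ _
  refine Submodule.span_le (p := (derivSpan (RingHom.ker ε ^ 2) D).comap φ).2 ?_ hT
  rintro _ ⟨f, hf, j, rfl⟩
  have hfield : linearVectorField D x (linearization ε D x (LinearMap.mulLeft K f ∘ₗ ↑(D j))) =
      LinearMap.mulLeft K (∑ p, ε (D p f) • x p) ∘ₗ ↑(D j) := by
    ext a
    simp [linearVectorField, h.linearization_mulLeft_comp hf, Matrix.vecMulVec_apply,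
      Pi.single_apply, Finset.sum_mul, LinearMap.sum_apply]
  have hdiff : LinearMap.mulLeft K f ∘ₗ ↑(D j) -
      LinearMap.mulLeft K (∑ p, ε (D p f) • x p) ∘ₗ ↑(D j) =
      LinearMap.mulLeft K (f - ∑ p, ε (D p f) • x p) ∘ₗ (D j : R →ₗ[K] R) := by
    ext a
    simp [sub_mul]
  simpa [φ, hfield, hdiff] using mulLeft_comp_mem_derivSpan D (h.sub_sum_mem_ker_sq hf) j

theorem linearization_eq_zero_iff (h : IsDualCoordinates ε D x) {T : Module.End K R}
    (hT : T ∈ derivSpan (RingHom.ker ε) D) :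
    linearization ε D x T = 0 ↔ T ∈ derivSpan (RingHom.ker ε ^ 2) D := by
  refine ⟨fun h0 => ?_, linearization_eq_zero_of_mem_derivSpan_sq⟩
  simpa [h0] using h.sub_linearVectorField_mem_derivSpan_sq hT

end IsDualCoordinates

end
theorem euler_single (m : ℕ) (i : Fin (m + 1)) (r : Fin (m + 1) →₀ ℤ) (c : ℂ) :
    euler m i (AddMonoidAlgebra.single r c) = (r i : ℂ) • AddMonoidAlgebra.single r c := by
  simp only [euler, LinearMap.comp_apply, LinearEquiv.coe_coe,
    AddMonoidAlgebra.coeffLinearEquiv_apply, AddMonoidAlgebra.coeff_single, Finsupp.lsum_single,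
    LinearMap.smul_apply, Finsupp.lsingle_apply, AddMonoidAlgebra.coeffLinearEquiv_symm_apply]
  rfl

theorem euler_mul (m : ℕ) (i : Fin (m + 1)) (f g : LaurentRing m) :
    euler m i (f * g) = f * euler m i g + g * euler m i f := by
  induction f using AddMonoidAlgebra.induction_linear with
  | zero => simp
  | add f₁ f₂ h₁ h₂ => simp only [add_mul, map_add, h₁, h₂]; ring
  | single r c =>
    induction g using AddMonoidAlgebra.induction_linear with
    | zero => simp
    | add g₁ g₂ h₁ h₂ => simp only [mul_add, map_add, h₁, h₂]; ring
    | single s d =>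
      simp only [AddMonoidAlgebra.single_mul_single, euler_single, Finsupp.add_apply,
        mul_smul_comm, add_comm s r, mul_comm d c]
      push_cast
      rw [add_smul, add_comm]

noncomputable def eulerDer (m : ℕ) (i : Fin (m + 1)) :
    Derivation ℂ (LaurentRing m) (LaurentRing m) :=
  Derivation.mk' (euler m i) (euler_mul m i)

theorem eulerDer_apply (m : ℕ) (i : Fin (m + 1)) (f : LaurentRing m) :
    eulerDer m i f = euler m i f :=
  rfl

theorem lie_eulerDer_eq_zero (m : ℕ) (i j : Fin (m + 1)) : ⁅eulerDer m i, eulerDer m j⁆ = 0 := by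
  refine Derivation.ext fun f => ?_
  rw [Derivation.commutator_apply, Derivation.zero_apply, sub_eq_zero]
  induction f using AddMonoidAlgebra.induction_linear with
  | zero => simp
  | add f₁ f₂ h₁ h₂ => simp only [map_add, h₁, h₂]
  | single r c => simp only [eulerDer_apply, euler_single, map_smul, smul_smul, mul_comm]

noncomputable def augmentation (m : ℕ) : LaurentRing m →ₐ[ℂ] ℂ :=
  AddMonoidAlgebra.lift ℂ ℂ (Fin (m + 1) →₀ ℤ) 1

theorem augmentation_single (m : ℕ) (r : Fin (m + 1) →₀ ℤ) (c : ℂ) :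
    augmentation m (AddMonoidAlgebra.single r c) = c := by
  simp [augmentation]

theorem tpow_add (m : ℕ) (r s : Fin (m + 1) →₀ ℤ) : tpow m (r + s) = tpow m r * tpow m s := by
  simp [tpow]

theorem tpow_zero (m : ℕ) : tpow m 0 = 1 := rfl

theorem tpow_sub_one_mem_sideal (m : ℕ) (r : Fin (m + 1) →₀ ℤ) : tpow m r - 1 ∈ Sideal m := by
  let H : AddSubgroup (Fin (m + 1) →₀ ℤ) :=
    { carrier := {r | tpow m r - 1 ∈ Sideal m}
      zero_mem' := by simp [tpow_zero]
      add_mem' := fun {r s} hr hs => by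
        have : tpow m (r + s) - 1 = tpow m r * (tpow m s - 1) + (tpow m r - 1) := by
          rw [tpow_add]; ring
        simpa [this] using add_mem (Ideal.mul_mem_left _ _ hs) hr
      neg_mem' := fun {r} hr => by
        have : tpow m (-r) - 1 = -tpow m (-r) * (tpow m r - 1) := by
          rw [neg_mul, mul_sub, ← tpow_add, neg_add_cancel, tpow_zero]; ring
        simpa [this] using Ideal.mul_mem_left _ (-tpow m (-r)) hr }
  have hH : H.toIntSubmodule = ⊤ := by
    rw [eq_top_iff, ← Finsupp.basisSingleOne.span_eq, Submodule.span_le]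
    rintro _ ⟨i, rfl⟩
    exact Ideal.subset_span ⟨i, by simp⟩
  exact (hH ▸ Submodule.mem_top : r ∈ H.toIntSubmodule)

theorem sideal_eq_ker_augmentation (m : ℕ) : Sideal m = RingHom.ker (augmentation m) := by
  refine le_antisymm (Ideal.span_le.2 ?_) fun f hf => ?_
  · rintro _ ⟨i, rfl⟩
    simp [tpow, augmentation_single]
  · have hsub : ∀ g : LaurentRing m, g - algebraMap ℂ _ (augmentation m g) ∈ Sideal m := by
      intro g
      induction g using AddMonoidAlgebra.induction_linear with
      | zero => simp
      | add g₁ g₂ h₁ h₂ => simpa [add_sub_add_comm] using add_mem h₁ h₂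
      | single r c =>
        have : AddMonoidAlgebra.single r c - algebraMap ℂ _ c = c • (tpow m r - 1) := by
          simp [tpow, smul_sub, Algebra.algebraMap_eq_smul_one]
        rw [augmentation_single, this]
        exact Submodule.smul_of_tower_mem _ c (tpow_sub_one_mem_sideal m r)
    simpa [RingHom.mem_ker.1 hf] using hsub f

theorem isDualCoordinates_augmentation (m : ℕ) :
    IsDualCoordinates (augmentation m) (eulerDer m) (fun i => tpow m (Finsupp.single i 1) - 1) where
  span_range_eq_ker := by
    rw [← sideal_eq_ker_augmentation, Sideal]
    congr 1
    ext f
    simp [eq_comm]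
  apply_apply p q := by
    rw [map_sub, Derivation.map_one_eq_zero, sub_zero, eulerDer_apply, tpow, euler_single,
      map_smul, augmentation_single, Finsupp.single_apply]
    split_ifs <;> simp_all [eq_comm]

theorem skDelta_eq_derivSpan (m k : ℕ) :
    SkDelta m k = derivSpan (RingHom.ker (augmentation m) ^ k) (eulerDer m) := by
  rw [← sideal_eq_ker_augmentation]
  rfl

/-- `SΔ` is a Lie subalgebra of `Der(A) ⊆ End(A)` (under the commutator bracket),
`S²Δ` is a Lie ideal of `SΔ`, and `SΔ/S²Δ ≅ gl(m+1,ℂ)` as Lie algebras via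
`(t_i − 1)·d_j + S²Δ ↦ E_{i,j}`.  The isomorphism of the quotient is expressed by a
surjective ℂ-linear map `e : SΔ → gl(m+1,ℂ)` with kernel exactly `S²Δ`, which
intertwines the commutator brackets and sends `(t_i − 1)·d_j` to `E_{i,j}`. -/
theorem sDelta_quotient_iso_gl (m : ℕ) :
    (∀ x ∈ SkDelta m 1, ∀ y ∈ SkDelta m 1, ⁅x, y⁆ ∈ SkDelta m 1) ∧
    (∀ x ∈ SkDelta m 1, ∀ y ∈ SkDelta m 2, ⁅x, y⁆ ∈ SkDelta m 2) ∧
    ∃ e : (SkDelta m 1 : Submodule ℂ (Module.End ℂ (LaurentRing m))) →ₗ[ℂ]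
        Matrix (Fin (m + 1)) (Fin (m + 1)) ℂ,
      Function.Surjective e ∧
      LinearMap.ker e = Submodule.comap (SkDelta m 1).subtype (SkDelta m 2) ∧
      (∀ x y z : SkDelta m 1,
        (z : Module.End ℂ (LaurentRing m)) =
            ⁅(x : Module.End ℂ (LaurentRing m)), (y : Module.End ℂ (LaurentRing m))⁆ →
        e z = e x * e y - e y * e x) ∧
      (∀ (i j : Fin (m + 1)) (x : SkDelta m 1),
        (x : Module.End ℂ (LaurentRing m)) =
            mulOp m (tpow m (Finsupp.single i 1) - 1) ∘ₗ euler m j →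
        e x = Matrix.single i j 1) := by
  have h := isDualCoordinates_augmentation m
  have hD := lie_eulerDer_eq_zero m
  rw [skDelta_eq_derivSpan, skDelta_eq_derivSpan, pow_one]
  refine ⟨fun T hT U hU => lie_mem_derivSpan hD hT hU,
    fun T hT U hU => lie_mem_derivSpan_pow_succ hD 1 hT hU,
    linearization (augmentation m) (eulerDer m) (fun i => tpow m (Finsupp.single i 1) - 1) ∘ₗ
      Submodule.subtype _, fun M => ?_, ?_, ?_, ?_⟩
  · exact ⟨⟨_, h.linearVectorField_mem_derivSpan M⟩, h.linearization_linearVectorField M⟩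
  · ext T
    exact h.linearization_eq_zero_iff T.2
  · intro T U V hV
    rw [LinearMap.comp_apply, Submodule.subtype_apply, hV]
    exact h.linearization_lie hD T.2 U.2
  · intro i j T hT
    rw [LinearMap.comp_apply, Submodule.subtype_apply, hT]
    exact h.linearization_mulLeft_comp_self i j
end

section
/- Let (A, k) be a Lie–Rinehart pair with associated quasi-Poisson algebra g = A ⊕ k, and let (M, φ, φ̂, ψ) be a quasi-Poisson module over (A,k). Then in End(M), for all a, b ∈ A: ψ_{ab} = −φ_{ab}ψ₁ + φ_a ψ_b + φ_b ψ_a. -/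
/-- The commutative product `(a⊕δ)·(b⊕σ) = ab ⊕ (aσ + bδ)` on the quasi-Poisson
algebra `g = A ⊕ k` of a Lie–Rinehart pair. -/
def qpMul {A : Type*} [CommRing A] {L : Type*} [AddCommGroup L] [Module A L]
    (x y : A × L) : A × L :=
  (x.1 * y.1, x.1 • y.2 + y.1 • x.2)

/-- The bracket `{a⊕δ, b⊕σ} = (δ(b) − σ(a)) ⊕ [δ,σ]` on `g = A ⊕ k`. -/
def qpBracket {A : Type*} [CommRing A] [Algebra ℂ A]
    {L : Type*} [LieRing L] [LieAlgebra ℂ L]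
    (act : L →ₗ⁅ℂ⁆ Derivation ℂ A A) (x y : A × L) : A × L :=
  (act x.2 y.1 - act y.2 x.1, ⁅x.2, y.2⁆)

/-!
Taking `x = a`, `y = b` in the axiom for `[φ̂_x, ψ_y]` gives `ψ_{ab} = [φ̂_a, ψ_b] + φ_b ψ_a`,
since `{a, b} = 0`. Now `φ̂_a = φ_a φ̂_1`, and `φ_a` commutes with `ψ_b` because `b` acts on `A`
as the zero derivation, so `[φ̂_a, ψ_b] = φ_a [φ̂_1, ψ_b]`; the case `a = 1` of the first identity
gives `[φ̂_1, ψ_b] = ψ_b − φ_b ψ_1`.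
-/

theorem Commute.mul_lie {R : Type*} [Ring R] {p r : R} (h : Commute p r) (q : R) :
    ⁅p * q, r⁆ = p * ⁅q, r⁆ := by
  rw [Ring.lie_def, Ring.lie_def, mul_sub, mul_assoc, ← mul_assoc r, ← h.eq, mul_assoc]

section QuasiPoisson

variable {A : Type*} [CommRing A] {L : Type*} {M : Type*} [AddCommGroup M] [Module ℂ M]

theorem qpMul_mk_zero [AddCommGroup L] [Module A L] (a b : A) :
    qpMul ((a, 0) : A × L) (b, 0) = (a * b, 0) := by
  simp [qpMul]

theorem qpBracket_mk_zero [Algebra ℂ A] [LieRing L] [LieAlgebra ℂ L]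
    (act : L →ₗ⁅ℂ⁆ Derivation ℂ A A) (a b : A) : qpBracket act ((a, 0) : A × L) (b, 0) = 0 := by
  simp [qpBracket]

theorem commute_phi_psi_mk_zero [Algebra ℂ A] [LieRing L] [LieAlgebra ℂ L]
    (act : L →ₗ⁅ℂ⁆ Derivation ℂ A A) (φ : A →ₐ[ℂ] Module.End ℂ M) (ψ : A × L → Module.End ℂ M)
    (hψφ : ∀ (x : A × L) (a : A), ⁅ψ x, φ a⁆ = φ (act x.2 a)) (a b : A) :
    Commute (φ a) (ψ (b, 0)) := by
  refine (commute_iff_lie_eq.mpr ?_).symm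
  simpa using hψφ (b, 0) a

theorem psi_mk_zero_mul [Algebra ℂ A] [LieRing L] [LieAlgebra ℂ L] [Module A L]
    (act : L →ₗ⁅ℂ⁆ Derivation ℂ A A) (φ : A → Module.End ℂ M) (ψ : A × L → Module.End ℂ M)
    (φh : (A × L) →ₗ[ℂ] Module.End ℂ M)
    (hφhψ : ∀ x y : A × L,
      ⁅φh x, ψ y⁆ = φh (qpBracket act x y) - φ y.1 * ψ x + ψ (qpMul x (y.1, 0)))
    (a b : A) : ψ (a * b, 0) = ⁅φh (a, 0), ψ (b, 0)⁆ + φ b * ψ (a, 0) := by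
  rw [hφhψ, qpBracket_mk_zero, qpMul_mk_zero, map_zero]
  abel

theorem phiHat_mk_zero [AddCommGroup L] [Module A L] (φ : A → Module.End ℂ M)
    (φh : A × L → Module.End ℂ M) (hφh : ∀ (a : A) (x : A × L), φh (qpMul (a, 0) x) = φ a * φh x)
    (a : A) : φh (a, 0) = φ a * φh (1, 0) := by
  simpa [qpMul_mk_zero] using hφh a (1, 0)

end QuasiPoisson

theorem qp_psi_mul_general (A : Type*) [CommRing A] [Algebra ℂ A]
    (L : Type*) [LieRing L] [LieAlgebra ℂ L] [Module A L]
    (act : L →ₗ⁅ℂ⁆ Derivation ℂ A A)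
    (M : Type*) [AddCommGroup M] [Module ℂ M]
    (φ : A →ₐ[ℂ] Module.End ℂ M)
    (ψ : (A × L) →ₗ[ℂ] Module.End ℂ M)
    (φh : (A × L) →ₗ[ℂ] Module.End ℂ M)
    (h4 : ∀ (a : A) (x : A × L), φh (qpMul (a, 0) x) = φ a * φh x)
    (h6 : ∀ x y : A × L,
      ⁅φh x, ψ y⁆ = φh (qpBracket act x y) - φ y.1 * ψ x + ψ (qpMul x (y.1, 0)))
    (h7 : ∀ (x : A × L) (a : A), ⁅ψ x, φ a⁆ = φ (act x.2 a)) :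
    ∀ a b : A,
      ψ (a * b, 0) = -(φ (a * b) * ψ (1, 0)) + φ a * ψ (b, 0) + φ b * ψ (a, 0) := by
  intro a b
  have lie_one : ⁅φh (1, 0), ψ (b, 0)⁆ = ψ (b, 0) - φ b * ψ (1, 0) := by
    rw [eq_sub_iff_add_eq, ← psi_mk_zero_mul act φ ψ φh h6, one_mul]
  have lie_a : ⁅φh (a, 0), ψ (b, 0)⁆ = φ a * (ψ (b, 0) - φ b * ψ (1, 0)) := by
    rw [phiHat_mk_zero φ φh h4, (commute_phi_psi_mk_zero act φ ψ h7 a b).mul_lie, lie_one]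
  rw [psi_mk_zero_mul act φ ψ φh h6, lie_a, map_mul]
  noncomm_ring

/-- In a quasi-Poisson module `(M, φ, φ̂, ψ)` over a Lie–Rinehart pair `(A, k)`,
one has `ψ_{ab} = −φ_{ab}ψ₁ + φ_a ψ_b + φ_b ψ_a` for all `a, b ∈ A`. -/
theorem qp_psi_mul (A : Type*) [CommRing A] [Algebra ℂ A]
    (L : Type*) [LieRing L] [LieAlgebra ℂ L] [Module A L]
    (act : L →ₗ⁅ℂ⁆ Derivation ℂ A A)
    (M : Type*) [AddCommGroup M] [Module ℂ M]
    (φ : A →ₐ[ℂ] Module.End ℂ M)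
    (ψ : (A × L) →ₗ[ℂ] Module.End ℂ M)
    (φh : (A × L) →ₗ[ℂ] Module.End ℂ M)
    (hψ : ∀ x y : A × L, ψ (qpBracket act x y) = ⁅ψ x, ψ y⁆)
    (h3 : ∀ x y : A × L, ⁅φh x, φh y⁆ = φh (qpMul x (y.1, 0)) - φh (qpMul (x.1, 0) y))
    (h4 : ∀ (a : A) (x : A × L), φh (qpMul (a, 0) x) = φ a * φh x)
    (h5 : ∀ (x : A × L) (a : A), ⁅φh x, φ a⁆ = 0)
    (h6 : ∀ x y : A × L,
      ⁅φh x, ψ y⁆ = φh (qpBracket act x y) - φ y.1 * ψ x + ψ (qpMul x (y.1, 0)))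
    (h7 : ∀ (x : A × L) (a : A), ⁅ψ x, φ a⁆ = φ (act x.2 a)) :
    ∀ a b : A,
      ψ (a * b, 0) = -(φ (a * b) * ψ (1, 0)) + φ a * ψ (b, 0) + φ b * ψ (a, 0) :=
  qp_psi_mul_general A L act M φ ψ φh h4 h6 h7
end
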